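/- With the Hayward mass m_H(a) of the ellipsoid x₁²+x₂²+x₃²/b² = a² in the Schwarzschild time slice defined as in the context, for every b > 1 the limit lim_{a→∞} m_H(a) exists and equals (m/4)·√(1 + Φ(b))·∫_0^π ((2b² − (1−b²)²·sin²θ·cos²θ)·sinθ)/(√(1+b²+(1−b²)·cos(2θ))·(b²·cos²θ + sin²θ)^{5/2}) dθ. -/

import Mathlib

open Real MeasureTheory Filter Topology

/-- Φ(b) = (b²/√(b²−1))·arcsin(√(b²−1)/b). -/
noncomputable def Phi (b : ℝ) : ℝ :=
  b ^ 2 / Real.sqrt (b ^ 2 - 1) * Real.arcsin (Real.sqrt (b ^ 2 - 1) / b)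

/-- ρ(θ) = √(sin²θ + b²·cos²θ). -/
noncomputable def rho (b θ : ℝ) : ℝ :=
  Real.sqrt (Real.sin θ ^ 2 + b ^ 2 * Real.cos θ ^ 2)

/-- E(a,θ) = (1 − 2m/R(a,θ))⁻¹ with R(a,θ) = a·ρ(θ): the radial coefficient of the
spatial Schwarzschild metric. -/
noncomputable def Esch (m b a θ : ℝ) : ℝ :=
  (1 - 2 * m / (a * rho b θ))⁻¹

/-- The metric component g₂₂ of the ellipsoid x₁²+x₂²+x₃²/b² = a². -/
noncomputable def gTwoTwo (m b a θ : ℝ) : ℝ :=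
  a ^ 2 * (b ^ 2 + Esch m b a θ * (b ^ 2 - 1) ^ 2 * Real.cos θ ^ 2 * Real.sin θ ^ 2)
    / rho b θ ^ 2

/-- D(a,θ) = a·sinθ·√(g₂₂(a,θ)): the area form density of the ellipsoid. -/
noncomputable def Dens (m b a θ : ℝ) : ℝ :=
  a * Real.sin θ * Real.sqrt (gTwoTwo m b a θ)

/-- Area(a) = 2π·∫_0^π D(a,θ) dθ. -/
noncomputable def AreaS (m b a : ℝ) : ℝ :=
  2 * Real.pi * ∫ θ in (0:ℝ)..Real.pi, Dens m b a θ

/-- α(a,θ) = a²·(1−b²)·sin²θ·cosθ·√(E(a,θ))/(ρ(θ)·D(a,θ)). -/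
noncomputable def alphaC (m b a θ : ℝ) : ℝ :=
  a ^ 2 * (1 - b ^ 2) * Real.sin θ ^ 2 * Real.cos θ * Real.sqrt (Esch m b a θ)
    / (rho b θ * Dens m b a θ)

/-- β(a,θ) = a²·b·sinθ/(ρ(θ)·D(a,θ)). -/
noncomputable def betaC (m b a θ : ℝ) : ℝ :=
  a ^ 2 * b * Real.sin θ / (rho b θ * Dens m b a θ)

/-- K(a,θ) = m·(2β² − α²)/R³: the curvature term R̃(e₂,e₃,e₂,e₃) along the
ellipsoid in the Schwarzschild slice. -/
noncomputable def Kcurv (m b a θ : ℝ) : ℝ :=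
  m * (2 * betaC m b a θ ^ 2 - alphaC m b a θ ^ 2) / (a * rho b θ) ^ 3

/-- The Hayward mass m_H(a) = √(Area(a)/16π)·(1/8π)·2π·∫_0^π 2·K·D dθ. -/
noncomputable def mHayward (m b a : ℝ) : ℝ :=
  Real.sqrt (AreaS m b a / (16 * Real.pi)) * (1 / (8 * Real.pi)) * (2 * Real.pi) *
    ∫ θ in (0:ℝ)..Real.pi, 2 * Kcurv m b a θ * Dens m b a θ

/-! ### Auxiliary definitions and lemmas -/

noncomputable def hFun (b t θ : ℝ) : ℝ :=
  Real.sin θ * (2 * b ^ 2 - (1 - b ^ 2) ^ 2 * Real.sin θ ^ 2 * Real.cos θ ^ 2 * (1 - t / rho b θ)⁻¹)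
    / (rho b θ ^ 4 * Real.sqrt (b ^ 2 + (1 - t / rho b θ)⁻¹ * (b ^ 2 - 1) ^ 2 * Real.cos θ ^ 2 * Real.sin θ ^ 2))

noncomputable def pFun (b t θ : ℝ) : ℝ :=
  Real.sin θ * Real.sqrt (b ^ 2 + (1 - t / rho b θ)⁻¹ * (b ^ 2 - 1) ^ 2 * Real.cos θ ^ 2 * Real.sin θ ^ 2)
    / rho b θ

lemma rho_sq (hb : 1 ≤ b) (θ : ℝ) : rho b θ ^ 2 = Real.sin θ ^ 2 + b ^ 2 * Real.cos θ ^ 2 := by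
  have : (0:ℝ) ≤ Real.sin θ ^ 2 + b ^ 2 * Real.cos θ ^ 2 := by positivity
  rw [rho, Real.sq_sqrt this]

lemma one_le_rho (hb : 1 ≤ b) (θ : ℝ) : 1 ≤ rho b θ := by
  rw [show (1:ℝ) = Real.sqrt 1 by simp]
  apply Real.sqrt_le_sqrt
  nlinarith [Real.sin_sq_add_cos_sq θ,
    mul_nonneg (show (0:ℝ) ≤ b^2 - 1 by nlinarith) (sq_nonneg (Real.cos θ))]

lemma rho_pos (hb : 1 ≤ b) (θ : ℝ) : 0 < rho b θ := lt_of_lt_of_le one_pos (one_le_rho hb θ)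

lemma E_one_le (hb : 1 ≤ b) {t : ℝ} (ht0 : 0 ≤ t) (ht : t ≤ 1/2) (θ : ℝ) :
    1 ≤ (1 - t / rho b θ)⁻¹ := by
  have hr := one_le_rho hb θ
  have h1 : t / rho b θ ≤ t := div_le_self ht0 hr
  have h2 : 0 ≤ t / rho b θ := div_nonneg ht0 (rho_pos hb θ).le
  exact one_le_inv_iff₀.2 ⟨by linarith, by linarith⟩

lemma E_le_two (hb : 1 ≤ b) {t : ℝ} (ht0 : 0 ≤ t) (ht : t ≤ 1/2) (θ : ℝ) :
    (1 - t / rho b θ)⁻¹ ≤ 2 := by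
  have hr := one_le_rho hb θ
  have h1 : t / rho b θ ≤ t := div_le_self ht0 hr
  rw [show (2:ℝ) = (1/2:ℝ)⁻¹ by norm_num]
  exact inv_anti₀ (by norm_num) (by linarith)

lemma esch_eq (m b a θ : ℝ) : Esch m b a θ = (1 - (2*m/a) / rho b θ)⁻¹ := by
  rw [Esch, div_div]

lemma dens_eq (hb : 1 ≤ b) (ha : 0 < a) (m θ : ℝ) :
    Dens m b a θ = a ^ 2 * pFun b (2*m/a) θ := by
  have hr0 : 0 < rho b θ := rho_pos hb θ
  have hg : gTwoTwo m b a θ = (a / rho b θ)^2 *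
      (b ^ 2 + (1 - (2*m/a) / rho b θ)⁻¹ * (b ^ 2 - 1) ^ 2 * Real.cos θ ^ 2 * Real.sin θ ^ 2) := by
    rw [gTwoTwo, esch_eq]; field_simp
  rw [Dens, hg, Real.sqrt_mul (sq_nonneg _), Real.sqrt_sq (by positivity : (0:ℝ) ≤ a / rho b θ),
    pFun]
  field_simp

set_option linter.unreachableTactic false in
set_option linter.unusedTactic false in
lemma kd_eq (hm : 0 < m) (hb : 1 ≤ b) (ha : 0 < a) (ht : 2*m/a ≤ 1/2) (θ : ℝ) :
    2 * Kcurv m b a θ * Dens m b a θ = (2*m/a) * hFun b (2*m/a) θ := by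
  have hr0 : 0 < rho b θ := rho_pos hb θ
  set s := Real.sin θ with hs_def
  set c := Real.cos θ with hc_def
  set r := rho b θ with hr_def
  have ht0 : 0 ≤ 2*m/a := by positivity
  have hE1 : 1 ≤ (1 - (2*m/a) / r)⁻¹ := E_one_le hb ht0 ht θ
  set E := (1 - (2*m/a) / r)⁻¹ with hE_def
  have hE0 : 0 < E := lt_of_lt_of_le one_pos hE1
  have hEe : Esch m b a θ = E := esch_eq m b a θ
  set w := b ^ 2 + E * (b ^ 2 - 1) ^ 2 * c ^ 2 * s ^ 2 with hw_def
  have hw0 : 0 < w := by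
    have hb0 : 0 < b := lt_of_lt_of_le one_pos hb
    have : 0 ≤ E * (b ^ 2 - 1) ^ 2 * c ^ 2 * s ^ 2 := by positivity
    positivity
  set W := Real.sqrt w with hW_def
  have hW0 : 0 < W := Real.sqrt_pos.2 hw0
  have hW2 : W ^ 2 = w := Real.sq_sqrt hw0.le
  have hg : gTwoTwo m b a θ = (a / r)^2 * w := by
    rw [gTwoTwo, hEe]
    simp only [← hs_def, ← hc_def, ← hr_def]
    field_simp
    all_goals ring
  have hsg : Real.sqrt (gTwoTwo m b a θ) = (a / r) * W := by
    rw [hg, Real.sqrt_mul (sq_nonneg _), Real.sqrt_sq (by positivity : (0:ℝ) ≤ a / r)]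
  have hD : Dens m b a θ = a^2 * s * W / r := by
    rw [Dens, hsg]
    simp only [← hs_def, ← hr_def]
    field_simp
    all_goals ring
  by_cases hs : s = 0
  · simp only [Kcurv, alphaC, betaC, hD, hs]
    norm_num
    right
    simp only [hFun]
    rw [← hs_def, hs]
    simp
  · have hβ : betaC m b a θ ^ 2 = b^2 / W^2 := by
      rw [betaC, hD]
      simp only [← hs_def, ← hr_def]
      field_simp
      all_goals ring
    have hα : alphaC m b a θ ^ 2 = (1-b^2)^2 * s^2 * c^2 * E / W^2 := by
      rw [alphaC, hD, hEe]
      simp only [← hs_def, ← hc_def, ← hr_def]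
      rw [div_pow, mul_pow, mul_pow, mul_pow, mul_pow, Real.sq_sqrt hE0.le]
      field_simp
      all_goals ring
    have hKD : Kcurv m b a θ = m * (2*b^2 - (1-b^2)^2*s^2*c^2*E) / (W^2 * (a*r)^3) := by
      rw [Kcurv, hβ, hα]
      simp only [← hr_def]
      field_simp
      all_goals ring
    have hW' : Real.sqrt (b ^ 2 + (1 - 2*m/a / r)⁻¹ * (b ^ 2 - 1) ^ 2 * c ^ 2 * s ^ 2) = W := by
      rw [← hE_def, ← hw_def]
    rw [hKD, hD]
    show _ = 2 * m / a * (s * (2 * b ^ 2 - (1 - b ^ 2) ^ 2 * s ^ 2 * c ^ 2 * (1 - 2*m/a / r)⁻¹)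
      / (r ^ 4 * Real.sqrt (b ^ 2 + (1 - 2*m/a / r)⁻¹ * (b ^ 2 - 1) ^ 2 * c ^ 2 * s ^ 2)))
    rw [hW', ← hE_def]
    field_simp
    all_goals ring

lemma hFun_bound (hb : 1 ≤ b) {t : ℝ} (ht0 : 0 ≤ t) (ht : t ≤ 1/2) (θ : ℝ) :
    |hFun b t θ| ≤ (2*b^2 + 2*(b^2-1)^2) / b := by
  have hb0 : 0 < b := lt_of_lt_of_le one_pos hb
  have hr := one_le_rho hb θ
  have hE1 := E_one_le hb ht0 ht θ
  have hE2 := E_le_two hb ht0 ht θ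
  set E := (1 - t / rho b θ)⁻¹ with hE_def
  have hq0 : (0:ℝ) ≤ E * (b ^ 2 - 1) ^ 2 * Real.cos θ ^ 2 * Real.sin θ ^ 2 := by positivity
  have hden1 : (1:ℝ) ≤ rho b θ ^ 4 := one_le_pow₀ hr
  have hdenW : b ≤ Real.sqrt (b ^ 2 + E * (b ^ 2 - 1) ^ 2 * Real.cos θ ^ 2 * Real.sin θ ^ 2) := by
    calc b = Real.sqrt (b^2) := (Real.sqrt_sq hb0.le).symm
    _ ≤ _ := by apply Real.sqrt_le_sqrt; linarith
  have hden : b ≤ rho b θ ^ 4 * Real.sqrt (b ^ 2 + E * (b ^ 2 - 1) ^ 2 * Real.cos θ ^ 2 * Real.sin θ ^ 2) := by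
    calc b = 1 * b := (one_mul b).symm
    _ ≤ rho b θ ^ 4 * Real.sqrt (b ^ 2 + E * (b ^ 2 - 1) ^ 2 * Real.cos θ ^ 2 * Real.sin θ ^ 2) := by
        apply mul_le_mul hden1 hdenW hb0.le (by positivity)
  have hnum : |Real.sin θ * (2 * b ^ 2 - (1 - b ^ 2) ^ 2 * Real.sin θ ^ 2 * Real.cos θ ^ 2 * E)|
      ≤ 2*b^2 + 2*(b^2-1)^2 := by
    rw [abs_mul]
    have h1 : |Real.sin θ| ≤ 1 := Real.abs_sin_le_one θ
    have hsc : Real.sin θ^2 * Real.cos θ^2 ≤ 1 := by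
      nlinarith [Real.sin_sq_le_one θ, Real.cos_sq_le_one θ, sq_nonneg (Real.sin θ), sq_nonneg (Real.cos θ)]
    have hA : (1-b^2)^2 * Real.sin θ^2 * Real.cos θ^2 ≤ (1-b^2)^2 := by
      nlinarith [hsc, sq_nonneg (1-b^2), mul_nonneg (sq_nonneg (Real.sin θ)) (sq_nonneg (Real.cos θ))]
    have e0 : (0:ℝ) ≤ E := le_trans zero_le_one hE1
    have hprodnn : (0:ℝ) ≤ (1-b^2)^2 * Real.sin θ^2 * Real.cos θ^2 * E := by positivity
    have hprod : (1-b^2)^2 * Real.sin θ^2 * Real.cos θ^2 * E ≤ 2*(b^2-1)^2 := by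
      calc (1-b^2)^2 * Real.sin θ^2 * Real.cos θ^2 * E ≤ (1-b^2)^2 * E :=
            mul_le_mul_of_nonneg_right hA e0
      _ ≤ (1-b^2)^2 * 2 := mul_le_mul_of_nonneg_left hE2 (sq_nonneg _)
      _ = 2*(b^2-1)^2 := by ring
    have h2 : |2 * b ^ 2 - (1 - b ^ 2) ^ 2 * Real.sin θ ^ 2 * Real.cos θ ^ 2 * E| ≤ 2*b^2 + 2*(b^2-1)^2 := by
      rw [abs_le]
      constructor
      · nlinarith [hprod, sq_nonneg b]
      · nlinarith [hprodnn]
    calc |Real.sin θ| * |2 * b ^ 2 - (1 - b ^ 2) ^ 2 * Real.sin θ ^ 2 * Real.cos θ ^ 2 * E|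
        ≤ 1 * (2*b^2 + 2*(b^2-1)^2) := by
          apply mul_le_mul h1 h2 (abs_nonneg _) (by norm_num)
    _ = 2*b^2 + 2*(b^2-1)^2 := one_mul _
  rw [hFun, abs_div]
  rw [abs_of_pos (show (0:ℝ) < rho b θ ^ 4 * Real.sqrt (b ^ 2 + E * (b ^ 2 - 1) ^ 2 * Real.cos θ ^ 2 * Real.sin θ ^ 2) from lt_of_lt_of_le hb0 hden)]
  exact div_le_div₀ (by positivity) hnum hb0 hden

lemma pFun_bound (hb : 1 ≤ b) {t : ℝ} (ht0 : 0 ≤ t) (ht : t ≤ 1/2) (θ : ℝ) :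
    |pFun b t θ| ≤ Real.sqrt (b^2 + 2*(b^2-1)^2) := by
  have hb0 : 0 < b := lt_of_lt_of_le one_pos hb
  have hr := one_le_rho hb θ
  have hE1 := E_one_le hb ht0 ht θ
  have hE2 := E_le_two hb ht0 ht θ
  set E := (1 - t / rho b θ)⁻¹ with hE_def
  have hW : Real.sqrt (b ^ 2 + E * (b ^ 2 - 1) ^ 2 * Real.cos θ ^ 2 * Real.sin θ ^ 2)
      ≤ Real.sqrt (b^2 + 2*(b^2-1)^2) := by
    apply Real.sqrt_le_sqrt
    have hsc : Real.cos θ^2 * Real.sin θ^2 ≤ 1 := by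
      nlinarith [Real.sin_sq_le_one θ, Real.cos_sq_le_one θ, sq_nonneg (Real.sin θ), sq_nonneg (Real.cos θ)]
    have hA : (b^2-1)^2 * Real.cos θ^2 * Real.sin θ^2 ≤ (b^2-1)^2 := by
      nlinarith [hsc, sq_nonneg (b^2-1), mul_nonneg (sq_nonneg (Real.cos θ)) (sq_nonneg (Real.sin θ))]
    have e0 : (0:ℝ) ≤ (b^2-1)^2 * Real.cos θ^2 * Real.sin θ^2 := by positivity
    nlinarith [mul_le_mul_of_nonneg_right hE2 e0, mul_le_mul_of_nonneg_left hA (show (0:ℝ) ≤ 2 by norm_num)]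
  rw [pFun, abs_div, abs_of_pos (rho_pos hb θ), abs_mul,
    abs_of_nonneg (Real.sqrt_nonneg _)]
  calc |Real.sin θ| * Real.sqrt (b ^ 2 + E * (b ^ 2 - 1) ^ 2 * Real.cos θ ^ 2 * Real.sin θ ^ 2) / rho b θ
      ≤ 1 * Real.sqrt (b^2 + 2*(b^2-1)^2) / 1 := by
        apply div_le_div₀ (by positivity) _ one_pos hr
        exact mul_le_mul (Real.abs_sin_le_one θ) hW (Real.sqrt_nonneg _) (by norm_num)
  _ = Real.sqrt (b^2 + 2*(b^2-1)^2) := by ring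

@[fun_prop]
lemma cont_rho (b : ℝ) : Continuous (rho b) := by
  apply Real.continuous_sqrt.comp
  fun_prop

lemma cont_E (hb : 1 ≤ b) {t : ℝ} (ht0 : 0 ≤ t) (ht : t ≤ 1/2) :
    Continuous (fun θ => (1 - t / rho b θ)⁻¹) := by
  apply Continuous.inv₀
  · exact continuous_const.sub (continuous_const.div (cont_rho b) (fun θ => (rho_pos hb θ).ne'))
  · intro θ
    have := E_one_le hb ht0 ht θ
    intro h
    rw [h] at this
    simp at this
    linarith

lemma cont_hFun (hb : 1 ≤ b) {t : ℝ} (ht0 : 0 ≤ t) (ht : t ≤ 1/2) :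
    Continuous (fun θ => hFun b t θ) := by
  have hb0 : 0 < b := lt_of_lt_of_le one_pos hb
  have hE := cont_E hb ht0 ht
  apply Continuous.div
  · fun_prop
  · apply Continuous.mul (by fun_prop)
    apply Real.continuous_sqrt.comp
    fun_prop
  · intro θ
    have hE1 := E_one_le hb ht0 ht θ
    have hr0 := rho_pos hb θ
    have h1 : (0:ℝ) < rho b θ ^ 4 := pow_pos (rho_pos hb θ) 4
    have h2 : (0:ℝ) < Real.sqrt (b ^ 2 + (1 - t / rho b θ)⁻¹ * (b ^ 2 - 1) ^ 2 * Real.cos θ ^ 2 * Real.sin θ ^ 2) := by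
      apply Real.sqrt_pos.2
      have : (0:ℝ) ≤ (1 - t / rho b θ)⁻¹ * (b ^ 2 - 1) ^ 2 * Real.cos θ ^ 2 * Real.sin θ ^ 2 := by
        have : (0:ℝ) ≤ (1 - t / rho b θ)⁻¹ := le_trans zero_le_one hE1
        positivity
      positivity
    positivity

lemma cont_pFun (hb : 1 ≤ b) {t : ℝ} (ht0 : 0 ≤ t) (ht : t ≤ 1/2) :
    Continuous (fun θ => pFun b t θ) := by
  have hE := cont_E hb ht0 ht
  apply Continuous.div
  · apply Continuous.mul (by fun_prop)
    apply Real.continuous_sqrt.comp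
    fun_prop
  · exact cont_rho b
  · exact fun θ => (rho_pos hb θ).ne'

lemma contAt_hFun (hb : 1 ≤ b) (θ : ℝ) : ContinuousAt (fun t => hFun b t θ) 0 := by
  have hb0 : 0 < b := lt_of_lt_of_le one_pos hb
  have hr0 := rho_pos hb θ
  have hEc : ContinuousAt (fun t : ℝ => (1 - t / rho b θ)⁻¹) 0 := by
    apply ContinuousAt.inv₀
    · fun_prop
    · simp [hr0.ne']
  apply ContinuousAt.div
  · exact (continuousAt_const.mul (continuousAt_const.sub (continuousAt_const.mul hEc)))
  · exact continuousAt_const.mul ((Real.continuous_sqrt.continuousAt).comp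
      (continuousAt_const.add ((hEc.mul continuousAt_const).mul continuousAt_const |>.mul continuousAt_const)))
  · show rho b θ ^ 4 * Real.sqrt (b ^ 2 + (1 - 0 / rho b θ)⁻¹ * (b ^ 2 - 1) ^ 2 * Real.cos θ ^ 2 * Real.sin θ ^ 2) ≠ 0
    simp only [zero_div, sub_zero, inv_one, one_mul]
    have h2 : (0:ℝ) < Real.sqrt (b ^ 2 + (b ^ 2 - 1) ^ 2 * Real.cos θ ^ 2 * Real.sin θ ^ 2) := by
      apply Real.sqrt_pos.2; positivity
    positivity

lemma contAt_pFun (hb : 1 ≤ b) (θ : ℝ) : ContinuousAt (fun t => pFun b t θ) 0 := by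
  have hb0 : 0 < b := lt_of_lt_of_le one_pos hb
  have hr0 := rho_pos hb θ
  have hEc : ContinuousAt (fun t : ℝ => (1 - t / rho b θ)⁻¹) 0 := by
    apply ContinuousAt.inv₀
    · fun_prop
    · simp [hr0.ne']
  apply ContinuousAt.div
  · exact continuousAt_const.mul ((Real.continuous_sqrt.continuousAt).comp
      (continuousAt_const.add ((hEc.mul continuousAt_const).mul continuousAt_const |>.mul continuousAt_const)))
  · exact continuousAt_const
  · exact hr0.ne'

lemma integral_sqrt_eval (hb : 1 < b) :
    ∫ θ in (0:ℝ)..Real.pi, Real.sin θ * Real.sqrt (b^2 - (b^2-1) * Real.cos θ^2)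
      = 1 + Phi b := by
  have hb0 : 0 < b := lt_trans one_pos hb
  have hk2pos : (0:ℝ) < b^2 - 1 := by nlinarith
  set k := Real.sqrt (b^2 - 1) with hk_def
  have hk0 : 0 < k := Real.sqrt_pos.2 hk2pos
  have hk2 : k^2 = b^2 - 1 := Real.sq_sqrt hk2pos.le
  have hkb : k < b := by
    nlinarith [hk2, hk0]
  -- antiderivative
  set G : ℝ → ℝ := fun θ => -(Real.cos θ * Real.sqrt (b^2 - (b^2-1) * Real.cos θ^2)) / 2
      - (b^2 / (2*k)) * Real.arcsin (k * Real.cos θ / b) with hG_def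
  have key : ∀ θ : ℝ, HasDerivAt G (Real.sin θ * Real.sqrt (b^2 - (b^2-1) * Real.cos θ^2)) θ := by
    intro θ
    have hcos : |Real.cos θ| ≤ 1 := Real.abs_cos_le_one θ
    have hinner_pos : (0:ℝ) < b^2 - (b^2-1) * Real.cos θ^2 := by
      nlinarith [Real.cos_sq_le_one θ, sq_nonneg (Real.cos θ)]
    set u := Real.sqrt (b^2 - (b^2-1) * Real.cos θ^2) with hu_def
    have hu0 : 0 < u := Real.sqrt_pos.2 hinner_pos
    have hu2 : u^2 = b^2 - (b^2-1) * Real.cos θ^2 := Real.sq_sqrt hinner_pos.le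
    -- derivative of inner
    have hinner : HasDerivAt (fun θ : ℝ => b^2 - (b^2-1) * Real.cos θ^2)
        (-( (b^2-1) * (2 * Real.cos θ * (-Real.sin θ)))) θ := by
      have h1 : HasDerivAt (fun θ : ℝ => Real.cos θ^2) (2 * Real.cos θ * (-Real.sin θ)) θ := by
        have := (Real.hasDerivAt_cos θ).pow 2
        simpa [mul_comm, Pi.pow_def] using this
      have := ((h1.const_mul (b^2-1)).const_sub (b^2))
      convert this using 1
      all_goals ring
    have hsqrt : HasDerivAt (fun θ : ℝ => Real.sqrt (b^2 - (b^2-1) * Real.cos θ^2))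
        ((-( (b^2-1) * (2 * Real.cos θ * (-Real.sin θ)))) / (2 * u)) θ :=
      hinner.sqrt hinner_pos.ne'
    have hterm1 : HasDerivAt (fun θ : ℝ => -(Real.cos θ * Real.sqrt (b^2 - (b^2-1) * Real.cos θ^2)) / 2)
        ((-((-Real.sin θ) * u + Real.cos θ * ((-( (b^2-1) * (2 * Real.cos θ * (-Real.sin θ)))) / (2 * u)))) / 2) θ := by
      exact (((Real.hasDerivAt_cos θ).mul hsqrt).neg).div_const 2
    -- arcsin part
    have harg : HasDerivAt (fun θ : ℝ => k * Real.cos θ / b) (k * (-Real.sin θ) / b) θ := by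
      exact ((Real.hasDerivAt_cos θ).const_mul k).div_const b
    have habs : |k * Real.cos θ / b| < 1 := by
      rw [abs_div, abs_mul, abs_of_pos hk0, abs_of_pos hb0, div_lt_one hb0]
      calc k * |Real.cos θ| ≤ k * 1 := by
            apply mul_le_mul_of_nonneg_left hcos hk0.le
      _ = k := mul_one k
      _ < b := hkb
    have harcsin : HasDerivAt (fun θ : ℝ => Real.arcsin (k * Real.cos θ / b))
        ((1 / Real.sqrt (1 - (k * Real.cos θ / b)^2)) * (k * (-Real.sin θ) / b)) θ := by
      have h1 := Real.hasDerivAt_arcsin (x := k * Real.cos θ / b)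
        ((abs_lt.1 habs).1.ne') ((abs_lt.1 habs).2.ne)
      exact HasDerivAt.comp θ h1 harg
    have hterm2 : HasDerivAt (fun θ : ℝ => (b^2 / (2*k)) * Real.arcsin (k * Real.cos θ / b))
        ((b^2 / (2*k)) * ((1 / Real.sqrt (1 - (k * Real.cos θ / b)^2)) * (k * (-Real.sin θ) / b))) θ :=
      harcsin.const_mul _
    have hG : HasDerivAt G
        ((-((-Real.sin θ) * u + Real.cos θ * ((-( (b^2-1) * (2 * Real.cos θ * (-Real.sin θ)))) / (2 * u)))) / 2
          - (b^2 / (2*k)) * ((1 / Real.sqrt (1 - (k * Real.cos θ / b)^2)) * (k * (-Real.sin θ) / b))) θ :=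
      hterm1.sub hterm2
    -- simplify √(1 - (k cos/b)^2) = u / b
    have hsimp : Real.sqrt (1 - (k * Real.cos θ / b)^2) = u / b := by
      have : 1 - (k * Real.cos θ / b)^2 = (b^2 - (b^2-1) * Real.cos θ^2) / b^2 := by
        rw [div_pow, mul_pow, hk2]
        field_simp
      rw [this, Real.sqrt_div hinner_pos.le, Real.sqrt_sq hb0.le]
    rw [hsimp] at hG
    convert hG using 1
    have hbne : (b:ℝ) ≠ 0 := hb0.ne'
    field_simp
    linear_combination (Real.sin θ) * hu2
  have hcont : Continuous (fun θ : ℝ => Real.sin θ * Real.sqrt (b^2 - (b^2-1) * Real.cos θ^2)) := by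
    apply Continuous.mul Real.continuous_sin
    apply Real.continuous_sqrt.comp
    fun_prop
  rw [intervalIntegral.integral_eq_sub_of_hasDerivAt (fun θ _ => key θ)
    (hcont.intervalIntegrable 0 Real.pi)]
  -- evaluate
  have h1 : Real.sqrt (b^2 - (b^2-1) * 1) = 1 := by
    rw [show b^2 - (b^2-1)*1 = 1 by ring, Real.sqrt_one]
  simp only [hG_def, Real.cos_pi, Real.cos_zero]
  rw [show ((-1:ℝ))^2 = 1 by norm_num, show ((1:ℝ))^2 = 1 by norm_num, h1,
    show k * -1 / b = -(k/b) by ring, Real.arcsin_neg, show k * 1 / b = k/b by ring,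
    Phi, ← hk_def]
  ring

lemma prod_identity (b θ : ℝ) :
    (Real.sin θ^2 + b^2 * Real.cos θ^2) * (b^2 - (b^2-1) * Real.cos θ^2)
      = b^2 + (b^2-1)^2 * Real.cos θ^2 * Real.sin θ^2 := by
  linear_combination (b^2*(1-(b^2-1)*Real.cos θ^2)) * Real.sin_sq_add_cos_sq θ

lemma inner_pos (hb : 1 < b) (θ : ℝ) : (0:ℝ) < b^2 - (b^2-1) * Real.cos θ^2 := by
  nlinarith [Real.cos_sq_le_one θ, sq_nonneg (Real.cos θ),
    mul_le_mul_of_nonneg_left (Real.cos_sq_le_one θ) (show (0:ℝ) ≤ b^2-1 by nlinarith)]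

lemma sqrt_w0 (hb : 1 < b) (θ : ℝ) :
    Real.sqrt (b ^ 2 + (b ^ 2 - 1) ^ 2 * Real.cos θ ^ 2 * Real.sin θ ^ 2)
      = rho b θ * Real.sqrt (b^2 - (b^2-1) * Real.cos θ^2) := by
  rw [← prod_identity b θ, ← rho_sq hb.le θ,
    Real.sqrt_mul (sq_nonneg _), Real.sqrt_sq (rho_pos hb.le θ).le]

lemma pFun_zero (hb : 1 < b) (θ : ℝ) :
    pFun b 0 θ = Real.sin θ * Real.sqrt (b^2 - (b^2-1) * Real.cos θ^2) := by
  have hr0 := rho_pos hb.le θ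
  rw [pFun]
  simp only [zero_div, sub_zero, inv_one, one_mul]
  rw [sqrt_w0 hb θ]
  field_simp

lemma hFun_zero (hb : 1 < b) (θ : ℝ) :
    hFun b 0 θ = Real.sqrt 2 *
      (((2 * b ^ 2 - (1 - b ^ 2) ^ 2 * Real.sin θ ^ 2 * Real.cos θ ^ 2) * Real.sin θ) /
        (Real.sqrt (1 + b ^ 2 + (1 - b ^ 2) * Real.cos (2 * θ)) *
          (b ^ 2 * Real.cos θ ^ 2 + Real.sin θ ^ 2) ^ ((5:ℝ) / 2))) := by
  have hr0 := rho_pos hb.le θ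
  have hv0 := inner_pos hb θ
  set v := b^2 - (b^2-1) * Real.cos θ^2 with hv_def
  have hsv0 : 0 < Real.sqrt v := Real.sqrt_pos.2 hv0
  -- denominator pieces
  have hd1 : Real.sqrt (1 + b ^ 2 + (1 - b ^ 2) * Real.cos (2 * θ)) = Real.sqrt 2 * Real.sqrt v := by
    rw [Real.cos_two_mul, show 1 + b ^ 2 + (1 - b ^ 2) * (2*Real.cos θ^2 - 1) = 2 * (b^2 - (b^2-1) * Real.cos θ^2) by ring,
      Real.sqrt_mul (by norm_num : (0:ℝ) ≤ 2)]
  have hd2 : (b ^ 2 * Real.cos θ ^ 2 + Real.sin θ ^ 2) ^ ((5:ℝ) / 2) = rho b θ ^ (5:ℕ) := by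
    rw [show b ^ 2 * Real.cos θ ^ 2 + Real.sin θ ^ 2 = rho b θ ^ 2 by rw [rho_sq hb.le θ]; ring]
    rw [← Real.rpow_natCast (rho b θ) 2, ← Real.rpow_mul hr0.le, ← Real.rpow_natCast (rho b θ) 5]
    norm_num
  rw [hFun]
  simp only [zero_div, sub_zero, inv_one, one_mul, mul_one]
  rw [sqrt_w0 hb θ, ← hv_def, hd1, hd2]
  have hs2 : (0:ℝ) < Real.sqrt 2 := by positivity
  field_simp

lemma tendsto_two_m_div (hm : 0 < m) : Tendsto (fun a : ℝ => 2*m/a) atTop (𝓝 0) :=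
  Tendsto.div_atTop tendsto_const_nhds tendsto_id

lemma eventually_t_ok (hm : 0 < m) :
    ∀ᶠ a : ℝ in atTop, 0 < a ∧ 0 ≤ 2*m/a ∧ 2*m/a ≤ 1/2 := by
  filter_upwards [eventually_ge_atTop (max 1 (4*m))] with a ha
  have ha1 : (1:ℝ) ≤ a := le_trans (le_max_left _ _) ha
  have ha4 : 4*m ≤ a := le_trans (le_max_right _ _) ha
  have ha0 : 0 < a := lt_of_lt_of_le one_pos ha1
  refine ⟨ha0, by positivity, ?_⟩
  rw [div_le_iff₀ ha0]
  linarith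

lemma tendsto_int_hFun (hm : 0 < m) (hb : 1 < b) :
    Tendsto (fun a => ∫ θ in (0:ℝ)..Real.pi, hFun b (2*m/a) θ) atTop
      (𝓝 (∫ θ in (0:ℝ)..Real.pi, hFun b 0 θ)) := by
  apply intervalIntegral.tendsto_integral_filter_of_dominated_convergence
    (fun _ => (2*b^2 + 2*(b^2-1)^2) / b)
  · filter_upwards [eventually_t_ok hm] with a ⟨ha0, ht0, ht⟩
    exact (cont_hFun hb.le ht0 ht).aestronglyMeasurable
  · filter_upwards [eventually_t_ok hm] with a ⟨ha0, ht0, ht⟩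
    filter_upwards with θ _
    rw [Real.norm_eq_abs]
    exact hFun_bound hb.le ht0 ht θ
  · exact intervalIntegrable_const
  · filter_upwards with θ _
    exact ((contAt_hFun hb.le θ).tendsto).comp (tendsto_two_m_div hm)

lemma tendsto_int_pFun (hm : 0 < m) (hb : 1 < b) :
    Tendsto (fun a => ∫ θ in (0:ℝ)..Real.pi, pFun b (2*m/a) θ) atTop
      (𝓝 (∫ θ in (0:ℝ)..Real.pi, pFun b 0 θ)) := by
  apply intervalIntegral.tendsto_integral_filter_of_dominated_convergence
    (fun _ => Real.sqrt (b^2 + 2*(b^2-1)^2))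
  · filter_upwards [eventually_t_ok hm] with a ⟨ha0, ht0, ht⟩
    exact (cont_pFun hb.le ht0 ht).aestronglyMeasurable
  · filter_upwards [eventually_t_ok hm] with a ⟨ha0, ht0, ht⟩
    filter_upwards with θ _
    rw [Real.norm_eq_abs]
    exact pFun_bound hb.le ht0 ht θ
  · exact intervalIntegrable_const
  · filter_upwards with θ _
    exact ((contAt_pFun hb.le θ).tendsto).comp (tendsto_two_m_div hm)

lemma integral_pFun_zero (hb : 1 < b) :
    ∫ θ in (0:ℝ)..Real.pi, pFun b 0 θ = 1 + Phi b := by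
  rw [intervalIntegral.integral_congr (g := fun θ => Real.sin θ * Real.sqrt (b^2 - (b^2-1) * Real.cos θ^2))
    (fun θ _ => pFun_zero hb θ)]
  exact integral_sqrt_eval hb

lemma Phi_nonneg (hb : 1 < b) : 0 ≤ Phi b := by
  have hb0 : 0 < b := lt_trans one_pos hb
  apply mul_nonneg (by positivity)
  exact Real.arcsin_nonneg.2 (by positivity)

/-- In the Schwarzschild time slice, the Hayward mass of the ellipsoid family
converges as a → ∞ to (m/4)·√(1+Φ(b))·I(b). -/
theorem hayward_mass_limit (m b : ℝ) (hm : 0 < m) (hb : 1 < b) :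
    Filter.Tendsto (fun a => mHayward m b a) Filter.atTop
      (𝓝 (m / 4 * Real.sqrt (1 + Phi b) *
        ∫ θ in (0:ℝ)..Real.pi,
          ((2 * b ^ 2 - (1 - b ^ 2) ^ 2 * Real.sin θ ^ 2 * Real.cos θ ^ 2) * Real.sin θ) /
            (Real.sqrt (1 + b ^ 2 + (1 - b ^ 2) * Real.cos (2 * θ)) *
              (b ^ 2 * Real.cos θ ^ 2 + Real.sin θ ^ 2) ^ ((5:ℝ) / 2)))) := by
  set I := ∫ θ in (0:ℝ)..Real.pi,
      ((2 * b ^ 2 - (1 - b ^ 2) ^ 2 * Real.sin θ ^ 2 * Real.cos θ ^ 2) * Real.sin θ) /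
        (Real.sqrt (1 + b ^ 2 + (1 - b ^ 2) * Real.cos (2 * θ)) *
          (b ^ 2 * Real.cos θ ^ 2 + Real.sin θ ^ 2) ^ ((5:ℝ) / 2)) with hI_def
  have hπ : (Real.pi:ℝ) ≠ 0 := Real.pi_ne_zero
  have hΦ0 : (0:ℝ) ≤ 1 + Phi b := by linarith [Phi_nonneg hb]
  -- eventual form of mHayward
  have heveq : ∀ᶠ a : ℝ in atTop, (m/2) * Real.sqrt ((∫ θ in (0:ℝ)..Real.pi, pFun b (2*m/a) θ)/8)
      * (∫ θ in (0:ℝ)..Real.pi, hFun b (2*m/a) θ) = mHayward m b a := by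
    filter_upwards [eventually_t_ok hm] with a ⟨ha0, ht0, ht⟩
    set P := ∫ θ in (0:ℝ)..Real.pi, pFun b (2*m/a) θ with hP_def
    set H := ∫ θ in (0:ℝ)..Real.pi, hFun b (2*m/a) θ with hH_def
    have hA : AreaS m b a = 2*Real.pi*(a^2 * P) := by
      rw [AreaS, intervalIntegral.integral_congr (g := fun θ => a^2 * pFun b (2*m/a) θ)
        (fun θ _ => dens_eq hb.le ha0 m θ), intervalIntegral.integral_const_mul]
    have hK : (∫ θ in (0:ℝ)..Real.pi, 2 * Kcurv m b a θ * Dens m b a θ) = (2*m/a) * H := by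
      rw [intervalIntegral.integral_congr (g := fun θ => (2*m/a) * hFun b (2*m/a) θ)
        (fun θ _ => kd_eq hm hb.le ha0 ht θ), intervalIntegral.integral_const_mul]
    rw [mHayward, hA, hK]
    have hsq : Real.sqrt (2*Real.pi*(a^2 * P)/(16*Real.pi)) = a * Real.sqrt (P/8) := by
      rw [show 2*Real.pi*(a^2*P)/(16*Real.pi) = a^2*(P/8) by field_simp; ring,
        Real.sqrt_mul (sq_nonneg a), Real.sqrt_sq ha0.le]
    rw [hsq]
    field_simp
    ring
  -- limits
  have tP : Tendsto (fun a : ℝ => ∫ θ in (0:ℝ)..Real.pi, pFun b (2*m/a) θ) atTop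
      (𝓝 (1 + Phi b)) := by
    have := tendsto_int_pFun hm hb
    rwa [integral_pFun_zero hb] at this
  have hH0 : (∫ θ in (0:ℝ)..Real.pi, hFun b 0 θ) = Real.sqrt 2 * I := by
    rw [intervalIntegral.integral_congr (g := fun θ => Real.sqrt 2 *
        (((2 * b ^ 2 - (1 - b ^ 2) ^ 2 * Real.sin θ ^ 2 * Real.cos θ ^ 2) * Real.sin θ) /
          (Real.sqrt (1 + b ^ 2 + (1 - b ^ 2) * Real.cos (2 * θ)) *
            (b ^ 2 * Real.cos θ ^ 2 + Real.sin θ ^ 2) ^ ((5:ℝ) / 2))))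
      (fun θ _ => hFun_zero hb θ), intervalIntegral.integral_const_mul, hI_def]
  have tH : Tendsto (fun a : ℝ => ∫ θ in (0:ℝ)..Real.pi, hFun b (2*m/a) θ) atTop
      (𝓝 (Real.sqrt 2 * I)) := by
    have := tendsto_int_hFun hm hb
    rwa [hH0] at this
  have main : Tendsto (fun a : ℝ => (m/2) * Real.sqrt ((∫ θ in (0:ℝ)..Real.pi, pFun b (2*m/a) θ)/8)
      * (∫ θ in (0:ℝ)..Real.pi, hFun b (2*m/a) θ)) atTop
      (𝓝 ((m/2) * Real.sqrt ((1 + Phi b)/8) * (Real.sqrt 2 * I))) := by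
    exact (tendsto_const_nhds.mul ((Real.continuous_sqrt.tendsto _).comp (tP.div_const 8))).mul tH
  have hval : (m/2) * Real.sqrt ((1 + Phi b)/8) * (Real.sqrt 2 * I) = m / 4 * Real.sqrt (1 + Phi b) * I := by
    have h8 : Real.sqrt ((1 + Phi b)/8) * Real.sqrt 2 = Real.sqrt (1 + Phi b) / 2 := by
      rw [← Real.sqrt_mul (by positivity) 2, show (1 + Phi b)/8*2 = (1 + Phi b)/4 by ring,
        Real.sqrt_div hΦ0, show Real.sqrt 4 = 2 by
          rw [show (4:ℝ) = 2^2 by norm_num, Real.sqrt_sq (by norm_num : (0:ℝ) ≤ 2)]]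
    calc (m/2) * Real.sqrt ((1 + Phi b)/8) * (Real.sqrt 2 * I)
        = (m/2) * (Real.sqrt ((1 + Phi b)/8) * Real.sqrt 2) * I := by ring
    _ = (m/2) * (Real.sqrt (1 + Phi b) / 2) * I := by rw [h8]
    _ = m / 4 * Real.sqrt (1 + Phi b) * I := by ring
  rw [← hval]
  exact Tendsto.congr' heveq main
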